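/- arXiv:1808.00045 — 8 statements merged into one kernel-verified Lean document; each statement's English description precedes it below -/
import Mathlib

section
/- Let q, r be coprime integers with 1 ≤ q ≤ r, let P ≥ 0 and N = rP+1, and let K ≥ 1. Then, as an identity of rational numbers, C(K + (r−q)P, N) = Σ_{λ ⊢ N} w(λ) · M(λ) · C(K, ℓ(λ)), where the sum runs over all partitions λ of N. -/
open Finset

/-- The Haldane weight `w(λ)` of a partition `λ` of `N`, for FES parameter `g = q/r`
with excess `P = (N-1)/r`:
`w(λ) = [C(P, ℓ(λ) − k₁(λ)) / C(ℓ(λ), k₁(λ))] · ∏_{j=0}^{r−q} C(r−q, j)^{k_{j+1}(λ)}`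
if the largest part of `λ` is at most `r − q + 1`, and `0` otherwise. -/
def haldaneWeight (q r P N : ℕ) (lam : Nat.Partition N) : ℚ :=
  if ∀ i ∈ lam.parts, i ≤ r - q + 1 then
    ((Nat.choose P (Multiset.card lam.parts - lam.parts.count 1) : ℚ) /
        (Nat.choose (Multiset.card lam.parts) (lam.parts.count 1) : ℚ)) *
      ∏ j ∈ Finset.range (r - q + 1),
        ((Nat.choose (r - q) j : ℚ)) ^ (lam.parts.count (j + 1))
  else 0

/-- The multinomial factor `M(λ) = ℓ(λ)! / ∏_{i=1}^N kᵢ(λ)!` of a partition `λ` of `N`. -/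
def multiFactor (N : ℕ) (lam : Nat.Partition N) : ℚ :=
  (Nat.factorial (Multiset.card lam.parts) : ℚ) /
    ∏ i ∈ Finset.Icc 1 N, (Nat.factorial (lam.parts.count i) : ℚ)

/-!
Write `s = r - q`. By the binomial and multinomial theorems,
`(1 + X)^(K + sP) = (1 + X)^K (1 + ∑_{j=1}^s C(s,j) X^j)^P` expands into a sum over `m ≤ P` and
multiplicity vectors `k` on `[1, s]` of total mass `m`, so `C(K + sP, N)` is a sum of terms
`C(P,m) · multinomial(k) · ∏ C(s,j)^(k_j) · C(K, N - ∑ j k_j)`.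
Sending `(m, k)` to the partition of `N` with `k_j` parts equal to `j + 1` and all other parts `1`
is a bijection onto the partitions of non-zero Haldane weight, because `(s + 1) P ≤ rP < N`.
For that partition `ℓ(λ) = N - ∑ j k_j` and `ℓ(λ) - k₁(λ) = m`, and since
`M(λ) = C(ℓ(λ), k₁(λ)) · multinomial(k)`, the factor `C(ℓ(λ), k₁(λ))` in the Haldane weight cancels
and `w(λ) M(λ) C(K, ℓ(λ))` is exactly the term indexed by `(m, k)`.
-/

open Polynomial

lemma sum_mul_le_mul_of_mem_piAntidiag {S : Finset ℕ} {f k : ℕ → ℕ} {B m : ℕ}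
    (hf : ∀ j ∈ S, f j ≤ B) (hk : k ∈ S.piAntidiag m) : ∑ j ∈ S, f j * k j ≤ B * m := by
  rw [(mem_piAntidiag.mp hk).1.symm, mul_sum]
  exact sum_le_sum fun j hj => Nat.mul_le_mul_right _ (hf j hj)

lemma range_succ_eq_insert_zero_Icc (s : ℕ) : range (s + 1) = insert 0 (Icc 1 s) :=
  (Nat.range_succ_eq_Icc_zero s).trans (insert_Icc_add_one_left_eq_Icc (Nat.zero_le s)).symm

lemma X_add_one_pow_eq_sum_Icc (R : Type*) [CommSemiring R] (s : ℕ) :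
    (X + 1 : R[X]) ^ s = ∑ j ∈ Icc 1 s, C (s.choose j : R) * X ^ j + 1 := by
  rw [add_pow, range_succ_eq_insert_zero_Icc, sum_insert (by simp), add_comm]
  simp only [one_pow, mul_one, pow_zero, Nat.choose_zero_right, Nat.cast_one, C_eq_natCast,
    mul_comm, one_mul]

lemma prod_C_mul_X_pow_pow {R : Type*} [CommSemiring R] (S : Finset ℕ) (c : ℕ → R) (k : ℕ → ℕ) :
    ∏ j ∈ S, (C (c j) * X ^ j) ^ k j = C (∏ j ∈ S, c j ^ k j) * X ^ ∑ j ∈ S, j * k j := by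
  simp_rw [mul_pow, ← C_pow, ← pow_mul, prod_mul_distrib, ← map_prod, prod_pow_eq_pow_sum]

lemma coeff_X_add_one_pow_mul_X_pow (R : Type*) [Semiring R] {K a N : ℕ} (h : a ≤ N) :
    ((X + 1 : R[X]) ^ K * X ^ a).coeff N = (K.choose (N - a) : R) := by
  rw [coeff_mul_X_pow', if_pos h, coeff_X_add_one_pow]

noncomputable def haldaneExpansion (s P K N : ℕ) : ℚ :=
  ∑ m ∈ range (P + 1), (P.choose m : ℚ) *
    ∑ k ∈ (Icc 1 s).piAntidiag m,
      (Nat.multinomial (Icc 1 s) k : ℚ) * (∏ j ∈ Icc 1 s, (s.choose j : ℚ) ^ k j) *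
        (K.choose (N - ∑ j ∈ Icc 1 s, j * k j) : ℚ)

theorem choose_add_mul_eq_haldaneExpansion {s P K N : ℕ} (hN : s * P ≤ N) :
    ((K + s * P).choose N : ℚ) = haldaneExpansion s P K N := by
  have hpow : (X + 1 : ℚ[X]) ^ (K + s * P) = ∑ m ∈ range (P + 1), ∑ k ∈ (Icc 1 s).piAntidiag m,
      C ((P.choose m : ℚ) * Nat.multinomial (Icc 1 s) k * ∏ j ∈ Icc 1 s, (s.choose j : ℚ) ^ k j) *
        ((X + 1) ^ K * X ^ ∑ j ∈ Icc 1 s, j * k j) := by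
    rw [pow_add, pow_mul, X_add_one_pow_eq_sum_Icc ℚ s, add_pow _ (1 : ℚ[X]) P, mul_sum]
    refine sum_congr rfl fun m _ => ?_
    rw [sum_pow_eq_sum_piAntidiag, sum_mul, sum_mul, mul_sum]
    refine sum_congr rfl fun k _ => ?_
    rw [prod_C_mul_X_pow_pow, map_mul, map_mul, map_natCast, map_natCast, one_pow, mul_one]
    ring
  rw [← coeff_X_add_one_pow ℚ, hpow, finsetSum_coeff, haldaneExpansion]
  refine sum_congr rfl fun m hm => ?_
  rw [finsetSum_coeff, mul_sum]
  refine sum_congr rfl fun k hk => ?_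
  have hdeg : ∑ j ∈ Icc 1 s, j * k j ≤ N :=
    (sum_mul_le_mul_of_mem_piAntidiag (fun j hj => (mem_Icc.mp hj).2) hk).trans
      ((Nat.mul_le_mul_left s (Nat.lt_succ_iff.mp (mem_range.mp hm))).trans hN)
  rw [coeff_C_mul, coeff_X_add_one_pow_mul_X_pow ℚ hdeg]
  ring

def partsOfMult (s c : ℕ) (k : ℕ → ℕ) : Multiset ℕ :=
  Multiset.replicate c 1 + ∑ j ∈ Icc 1 s, Multiset.replicate (k j) (j + 1)

def multOf (s : ℕ) (M : Multiset ℕ) (j : ℕ) : ℕ :=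
  if j ∈ Icc 1 s then M.count (j + 1) else 0

section partsOfMult

variable {s c : ℕ} {k : ℕ → ℕ}

lemma count_succ_partsOfMult (i : ℕ) :
    (partsOfMult s c k).count (i + 1) =
      (if i = 0 then c else 0) + if i ∈ Icc 1 s then k i else 0 := by
  simp [partsOfMult, Multiset.count_replicate, Multiset.count_sum']

lemma count_one_partsOfMult : (partsOfMult s c k).count 1 = c := by
  simpa using count_succ_partsOfMult (s := s) (c := c) (k := k) 0

lemma mem_partsOfMult {i : ℕ} (hi : i ∈ partsOfMult s c k) : 1 ≤ i ∧ i ≤ s + 1 := by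
  simp only [partsOfMult, Multiset.mem_add, Multiset.mem_sum, Multiset.mem_replicate] at hi
  grind

lemma card_partsOfMult : Multiset.card (partsOfMult s c k) = c + ∑ j ∈ Icc 1 s, k j := by
  simp [partsOfMult, Multiset.card_sum]

lemma sum_partsOfMult : (partsOfMult s c k).sum = c + ∑ j ∈ Icc 1 s, (j + 1) * k j := by
  simp [partsOfMult, Multiset.sum_sum, mul_comm]

lemma multOf_partsOfMult (hk : ∀ j, k j ≠ 0 → j ∈ Icc 1 s) : multOf s (partsOfMult s c k) = k := by
  ext j
  by_cases hj : j ∈ Icc 1 s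
  · rw [multOf, if_pos hj, count_succ_partsOfMult, if_pos hj, if_neg (by grind), zero_add]
  · rw [multOf, if_neg hj]
    grind

lemma partsOfMult_multOf {M : Multiset ℕ} (hM : ∀ i ∈ M, 1 ≤ i ∧ i ≤ s + 1) :
    partsOfMult s (M.count 1) (multOf s M) = M := by
  ext i
  rcases i with _ | i
  · rw [Multiset.count_eq_zero.mpr fun h => by grind [mem_partsOfMult h],
      Multiset.count_eq_zero.mpr fun h => by grind]
  · rw [count_succ_partsOfMult, multOf]
    by_cases hi : i ∈ Icc 1 s
    · grind
    · rcases Nat.eq_zero_or_pos i with rfl | hpos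
      · simp
      · rw [if_neg hpos.ne', if_neg hi, Multiset.count_eq_zero.mpr fun h => by grind]

end partsOfMult

def partitionOfMult (N s : ℕ) (k : ℕ → ℕ) (h : ∑ j ∈ Icc 1 s, (j + 1) * k j ≤ N) :
    Nat.Partition N where
  parts := partsOfMult s (N - ∑ j ∈ Icc 1 s, (j + 1) * k j) k
  parts_pos hi := (mem_partsOfMult hi).1
  parts_sum := by rw [sum_partsOfMult]; omega

section multOf

variable {N s : ℕ} (lam : Nat.Partition N)

lemma partsOfMult_count_one_multOf (hlam : ∀ i ∈ lam.parts, i ≤ s + 1) :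
    partsOfMult s (lam.parts.count 1) (multOf s lam.parts) = lam.parts :=
  partsOfMult_multOf fun i hi => ⟨lam.parts_pos hi, hlam i hi⟩

lemma multOf_mem_piAntidiag (hlam : ∀ i ∈ lam.parts, i ≤ s + 1) :
    multOf s lam.parts ∈
      (Icc 1 s).piAntidiag (Multiset.card lam.parts - lam.parts.count 1) := by
  have hcard := card_partsOfMult (s := s) (c := lam.parts.count 1) (k := multOf s lam.parts)
  rw [partsOfMult_count_one_multOf lam hlam] at hcard
  refine mem_piAntidiag.mpr ⟨(Nat.sub_eq_of_eq_add' hcard).symm, fun j hj => ?_⟩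
  by_contra h
  exact hj (if_neg h)

lemma partitionOfMult_multOf (hlam : ∀ i ∈ lam.parts, i ≤ s + 1)
    (h : ∑ j ∈ Icc 1 s, (j + 1) * multOf s lam.parts j ≤ N) :
    partitionOfMult N s (multOf s lam.parts) h = lam := by
  have hsum := sum_partsOfMult (s := s) (c := lam.parts.count 1) (k := multOf s lam.parts)
  rw [partsOfMult_count_one_multOf lam hlam, lam.parts_sum] at hsum
  ext1
  simp only [partitionOfMult]
  rw [show N - ∑ j ∈ Icc 1 s, (j + 1) * multOf s lam.parts j = lam.parts.count 1 by omega,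
    partsOfMult_count_one_multOf lam hlam]

end multOf

lemma Nat.multinomial_map {α β : Type*} (s : Finset α) (e : α ↪ β) (f : β → ℕ) :
    Nat.multinomial (s.map e) f = Nat.multinomial s (f ∘ e) := by
  simp [Nat.multinomial, sum_map, prod_map]

lemma multiFactor_eq_multinomial {N : ℕ} (lam : Nat.Partition N) {T : Finset ℕ}
    (hT : ∀ i ∈ lam.parts, i ∈ T) :
    multiFactor N lam = Nat.multinomial T (lam.parts.count ·) := by
  have hIcc : ∀ i ∈ lam.parts, i ∈ Icc 1 N := fun i hi =>
    mem_Icc.mpr ⟨lam.parts_pos hi, lam.le_of_mem_parts hi⟩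
  have hspec := Nat.multinomial_spec (Icc 1 N) (lam.parts.count ·)
  rw [Multiset.sum_count_eq_card hIcc] at hspec
  rw [← Nat.multinomial_congr_of_eq_on_inter (s := Icc 1 N) (by grind [Multiset.count_eq_zero])
    (by grind [Multiset.count_eq_zero]) (fun _ _ => rfl), multiFactor, ← hspec]
  push_cast
  rw [mul_div_cancel_left₀ _ (prod_ne_zero_iff.mpr fun i _ => by positivity)]

lemma multiFactor_eq_choose_mul_multinomial {N s : ℕ} (lam : Nat.Partition N)
    (hlam : ∀ i ∈ lam.parts, i ≤ s + 1) :
    multiFactor N lam = (Multiset.card lam.parts).choose (lam.parts.count 1) *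
      Nat.multinomial (Icc 1 s) (multOf s lam.parts) := by
  have hT : ∀ i ∈ lam.parts, i ∈ (range (s + 1)).map (addRightEmbedding 1) := fun i hi => by
    have := lam.parts_pos hi
    have := hlam i hi
    simp only [mem_map, mem_range, addRightEmbedding_apply]
    exact ⟨i - 1, by omega, by omega⟩
  have hcard := Multiset.sum_count_eq_card hT
  rw [sum_map, range_succ_eq_insert_zero_Icc, sum_insert (by simp)] at hcard
  rw [multiFactor_eq_multinomial lam hT, Nat.multinomial_map, range_succ_eq_insert_zero_Icc,
    Nat.multinomial_insert (by simp)]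
  simp only [Function.comp_apply, addRightEmbedding_apply, zero_add] at hcard ⊢
  rw [hcard, Nat.multinomial_congr (g := multOf s lam.parts) fun j hj => by simp [multOf, hj]]
  push_cast
  ring

section HaldaneWeight

variable {q r P N : ℕ}

lemma haldaneWeight_mul_multiFactor (lam : Nat.Partition N)
    (hlam : ∀ i ∈ lam.parts, i ≤ r - q + 1) :
    haldaneWeight q r P N lam * multiFactor N lam =
      (P.choose (Multiset.card lam.parts - lam.parts.count 1) : ℚ) *
        Nat.multinomial (Icc 1 (r - q)) (multOf (r - q) lam.parts) *
        ∏ j ∈ Icc 1 (r - q), ((r - q).choose j : ℚ) ^ multOf (r - q) lam.parts j := by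
  have hchoose : ((Multiset.card lam.parts).choose (lam.parts.count 1) : ℚ) ≠ 0 :=
    Nat.cast_ne_zero.mpr (Nat.choose_pos (Multiset.count_le_card _ _)).ne'
  have hprod : ∏ j ∈ Icc 1 (r - q), ((r - q).choose j : ℚ) ^ multOf (r - q) lam.parts j =
      ∏ j ∈ Icc 1 (r - q), ((r - q).choose j : ℚ) ^ lam.parts.count (j + 1) :=
    prod_congr rfl fun j hj => by rw [multOf, if_pos hj]
  rw [haldaneWeight, if_pos hlam, multiFactor_eq_choose_mul_multinomial lam hlam, hprod,
    range_succ_eq_insert_zero_Icc, prod_insert (by simp)]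
  field_simp
  simp

lemma haldaneWeight_mul_multiFactor_partitionOfMult (K : ℕ) {m : ℕ} {k : ℕ → ℕ}
    (hk : k ∈ (Icc 1 (r - q)).piAntidiag m) (h : ∑ j ∈ Icc 1 (r - q), (j + 1) * k j ≤ N) :
    haldaneWeight q r P N (partitionOfMult N (r - q) k h) *
        multiFactor N (partitionOfMult N (r - q) k h) *
        (K.choose (Multiset.card (partitionOfMult N (r - q) k h).parts) : ℚ) =
      (P.choose m : ℚ) * ((Nat.multinomial (Icc 1 (r - q)) k : ℚ) *
        (∏ j ∈ Icc 1 (r - q), ((r - q).choose j : ℚ) ^ k j) *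
        (K.choose (N - ∑ j ∈ Icc 1 (r - q), j * k j) : ℚ)) := by
  obtain ⟨hkm, hk⟩ := mem_piAntidiag.mp hk
  have hsplit : ∑ j ∈ Icc 1 (r - q), (j + 1) * k j = ∑ j ∈ Icc 1 (r - q), j * k j + m := by
    rw [← hkm, ← sum_add_distrib]
    exact sum_congr rfl fun j _ => add_one_mul j (k j)
  rw [haldaneWeight_mul_multiFactor _ fun i hi => (mem_partsOfMult hi).2]
  simp only [partitionOfMult]
  rw [multOf_partsOfMult hk, card_partsOfMult, count_one_partsOfMult, hkm,
    Nat.add_sub_cancel_left, show N - ∑ j ∈ Icc 1 (r - q), (j + 1) * k j + m =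
      N - ∑ j ∈ Icc 1 (r - q), j * k j by omega]
  ring

end HaldaneWeight

theorem sum_haldaneWeight_eq_haldaneExpansion {q r P K N : ℕ} (hN : (r - q + 1) * P ≤ N) :
    ∑ lam : Nat.Partition N, haldaneWeight q r P N lam * multiFactor N lam *
        (K.choose (Multiset.card lam.parts) : ℚ) = haldaneExpansion (r - q) P K N := by
  have hbound : ∀ x ∈ (range (P + 1)).sigma fun m => (Icc 1 (r - q)).piAntidiag m,
      ∑ j ∈ Icc 1 (r - q), (j + 1) * x.2 j ≤ N := fun x hx => by
    rw [mem_sigma, mem_range] at hx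
    exact (sum_mul_le_mul_of_mem_piAntidiag (fun j hj => by grind) hx.2).trans
      ((Nat.mul_le_mul_left _ (Nat.lt_succ_iff.mp hx.1)).trans hN)
  have hval x (hx) := haldaneWeight_mul_multiFactor_partitionOfMult (P := P) K
    (mem_sigma.mp hx).2 (hbound x hx)
  rw [haldaneExpansion]
  simp only [mul_sum]
  rw [sum_sigma']
  symm
  refine sum_bij_ne_zero (fun x hx _ => partitionOfMult N (r - q) x.2 (hbound x hx))
    (fun _ _ _ => mem_univ _) ?inj ?surj fun x hx _ => (hval x hx).symm
  case inj =>
    rintro ⟨m, k⟩ hx - ⟨m', k'⟩ hx' - h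
    simp only [mem_sigma, mem_piAntidiag] at hx hx'
    obtain rfl : k = k' := by
      rw [← multOf_partsOfMult hx.2.2, ← multOf_partsOfMult hx'.2.2]
      exact congrArg (multOf (r - q) ·.parts) h
    rw [← hx.2.1, hx'.2.1]
  case surj =>
    intro lam _ hne
    have hlam : ∀ i ∈ lam.parts, i ≤ r - q + 1 := by
      by_contra h
      exact hne (by rw [haldaneWeight, if_neg h, zero_mul, zero_mul])
    have hm : Multiset.card lam.parts - lam.parts.count 1 ≤ P := by
      by_contra h
      rw [haldaneWeight_mul_multiFactor lam hlam, Nat.choose_eq_zero_of_lt (by omega)] at hne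
      simp at hne
    have hmem : (⟨_, multOf (r - q) lam.parts⟩ : Σ _ : ℕ, ℕ → ℕ) ∈
        (range (P + 1)).sigma fun m => (Icc 1 (r - q)).piAntidiag m :=
      mem_sigma.mpr ⟨mem_range.mpr (Nat.lt_succ_of_le hm), multOf_mem_piAntidiag lam hlam⟩
    have heq := partitionOfMult_multOf lam hlam (hbound _ hmem)
    exact ⟨_, hmem, by rwa [← hval _ hmem, heq], heq⟩

theorem stmt1_general (q r P K N : ℕ) (hq : 1 ≤ q) (hqr : q ≤ r)
    (hN : N = r * P + 1) :
    (Nat.choose (K + (r - q) * P) N : ℚ) =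
      ∑ lam : Nat.Partition N,
        haldaneWeight q r P N lam * multiFactor N lam *
          (Nat.choose K (Multiset.card lam.parts) : ℚ) := by
  have hbound : (r - q + 1) * P ≤ N :=
    (Nat.mul_le_mul_right P (by omega : r - q + 1 ≤ r)).trans (by omega)
  rw [choose_add_mul_eq_haldaneExpansion ((Nat.mul_le_mul_right P (Nat.le_succ _)).trans hbound),
    sum_haldaneWeight_eq_haldaneExpansion hbound]

/-- For coprime `q ≤ r`, `N = rP + 1` and `K ≥ 1`, the Haldane state count
satisfies `C(K + (r−q)P, N) = Σ_{λ ⊢ N} w(λ) · M(λ) · C(K, ℓ(λ))` in `ℚ`. -/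
theorem stmt1 (q r P K N : ℕ) (hq : 1 ≤ q) (hqr : q ≤ r) (hcop : Nat.Coprime q r)
    (hK : 1 ≤ K) (hN : N = r * P + 1) :
    (Nat.choose (K + (r - q) * P) N : ℚ) =
      ∑ lam : Nat.Partition N,
        haldaneWeight q r P N lam * multiFactor N lam *
          (Nat.choose K (Multiset.card lam.parts) : ℚ) :=
  stmt1_general q r P K N hq hqr hN
end

section
/- Let q, r be coprime integers with 1 ≤ q ≤ r, let P ≥ 0 and N = rP+1. Then for every integer t with 0 ≤ t ≤ N, the sum of w(λ)·M(λ) over all partitions λ of N having exactly t parts equals C((r−q)P, N − t). (In particular, under the Haldane probability measure the number of occupied states ℓ(λ) follows a hypergeometric law with parameters K, K+(r−q)P and N.) -/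
open Finset

/-!
Lowering every part of `λ` by one and discarding the zeros turns `λ` into a partition `μ` of
`N - t`, and `w(λ) M(λ)` into `C(P, ℓ(μ)) · ℓ(μ)! / ∏ kᵢ(μ)! · ∏ᵢ C(r - q, μᵢ)`, the cutoff on the
largest part being built into the binomial coefficients. Padding `μ` with zeros to a multiset of
`P` exponents in `[0, r - q]`, the sum of these weights over all partitions of `d` becomes the
coefficient of `X^d` in `((1 + X)^(r-q))^P` expanded by the multinomial theorem, i.e.
`C((r - q) P, d)`. The partitions `μ` with `ℓ(μ) > t`, which come from no `λ`, have weight zero: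
when `t < ℓ(μ) ≤ P`, `N = rP + 1` exceeds `(r - q) ℓ(μ) + t`.
-/

open Polynomial
open scoped Nat

namespace Multiset

variable {α : Type*} [DecidableEq α]

theorem prod_factorial_count_mul_countPerms (m : Multiset α) :
    (∏ a ∈ m.toFinset, (m.count a)!) * m.countPerms = (card m)! := by
  rw [← m.toFinset_sum_count_eq]
  exact Nat.multinomial_spec _ _

theorem countPerms_map_of_injective {β : Type*} [DecidableEq β] {f : α → β}
    (hf : Function.Injective f) (m : Multiset α) : (m.map f).countPerms = m.countPerms := by
  have h := prod_factorial_count_mul_countPerms (m.map f)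
  rw [toFinset_map, Finset.prod_image hf.injOn, card_map,
    ← prod_factorial_count_mul_countPerms m] at h
  simp only [count_map_eq_count' f m hf] at h
  exact Nat.eq_of_mul_eq_mul_left (Finset.prod_pos fun _ _ => Nat.factorial_pos _) h

theorem filter_ne_add_replicate_count (a : α) (m : Multiset α) :
    m.filter (· ≠ a) + replicate (m.count a) a = m := by
  conv_rhs => rw [← filter_add_not (· ≠ a) m]
  simp only [ne_eq, not_not, filter_eq']

theorem card_filter_ne_add_count (a : α) (m : Multiset α) :
    card (m.filter (· ≠ a)) + m.count a = card m := by
  conv_rhs => rw [← filter_ne_add_replicate_count a m]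
  rw [card_add, card_replicate]

theorem eq_of_card_eq_of_filter_ne_eq {a : α} {m m' : Multiset α} (hcard : card m = card m')
    (hfilter : m.filter (· ≠ a) = m'.filter (· ≠ a)) : m = m' := by
  have hcount : m.count a = m'.count a := by
    have := card_filter_ne_add_count a m
    have := card_filter_ne_add_count a m'
    rw [hfilter] at *
    omega
  rw [← filter_ne_add_replicate_count a m, ← filter_ne_add_replicate_count a m', hfilter, hcount]

theorem filter_ne_add_replicate {a : α} {m : Multiset α} (ha : a ∉ m) (n : ℕ) :
    (m + replicate n a).filter (· ≠ a) = m := by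
  rw [filter_add, filter_eq_self.mpr fun b hb => ne_of_mem_of_not_mem hb ha,
    filter_eq_nil.mpr fun b hb => by simp [eq_of_mem_replicate hb], add_zero]

theorem countPerms_eq_choose_count_mul (a : α) (m : Multiset α) :
    m.countPerms = (card m).choose (m.count a) * (m.filter (· ≠ a)).countPerms := by
  rw [countPerms_filter_ne a, filter_congr fun _ _ => ne_comm]

theorem prod_map_filter_ne {M : Type*} [CommMonoid M] {f : α → M} {a : α} (hf : f a = 1)
    (m : Multiset α) : ((m.filter (· ≠ a)).map f).prod = (m.map f).prod := by
  conv_rhs => rw [← filter_ne_add_replicate_count a m]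
  rw [map_add, prod_add, map_replicate, hf, prod_replicate, one_pow, mul_one]

theorem sum_map_add_one (κ : Multiset ℕ) : (κ.map (· + 1)).sum = κ.sum + card κ := by
  simp [sum_map_add]

theorem prod_map_C_mul_X_pow {R : Type*} [CommSemiring R] (c : ℕ → R) (k : Multiset ℕ) :
    (k.map fun i => C (c i) * X ^ i).prod = C (k.map c).prod * X ^ k.sum := by
  induction k using Multiset.induction_on with
  | empty => simp
  | cons a k ih =>
    simp only [map_cons, prod_cons, sum_cons, ih, C_mul, pow_add]
    ring

end Multiset

theorem sum_sym_countPerms_mul_prod_choose (s P d : ℕ) :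
    ∑ k ∈ ((range (s + 1)).sym P).filter (fun k : Sym ℕ P => (k : Multiset ℕ).sum = d),
      (k : Multiset ℕ).countPerms * ((k : Multiset ℕ).map s.choose).prod = (s * P).choose d := by
  have hbinom : (1 + X : ℕ[X]) ^ s = ∑ i ∈ range (s + 1), C (s.choose i) * X ^ i := by
    rw [add_comm, add_pow]
    refine Finset.sum_congr rfl fun i _ => ?_
    simp [mul_comm]
  have hcoeff := congrArg (coeff · d) (congrArg (· ^ P) hbinom)
  simp only [← pow_mul, coeff_one_add_X_pow, Finset.sum_pow, finsetSum_coeff, Nat.cast_id,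
    Multiset.prod_map_C_mul_X_pow, ← C_eq_natCast, ← mul_assoc, ← C_mul,
    coeff_C_mul_X_pow] at hcoeff
  rw [hcoeff, Finset.sum_filter]
  exact Finset.sum_congr rfl fun k _ => if_congr eq_comm rfl rfl

/-- The number of `d`-element subsets of an `s × P` grid whose nonempty columns have sizes `μ`
(`d = μ.sum`): choose the columns, distribute the sizes among them, choose the cells. -/
noncomputable def gridCount (s P : ℕ) (μ : Multiset ℕ) : ℕ :=
  P.choose (Multiset.card μ) * μ.countPerms * (μ.map s.choose).prod

theorem le_of_gridCount_ne_zero {s P : ℕ} {μ : Multiset ℕ} (h : gridCount s P μ ≠ 0) :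
    Multiset.card μ ≤ P ∧ ∀ i ∈ μ, i ≤ s := by
  simp only [gridCount, ne_eq, mul_eq_zero, Nat.choose_eq_zero_iff, Multiset.prod_eq_zero_iff,
    Multiset.mem_map, not_or, not_lt, not_exists, not_and] at h
  exact ⟨h.1.1, fun i hi => by simpa using h.2 i hi⟩

theorem gridCount_filter_ne_zero (s : ℕ) (κ : Multiset ℕ) :
    gridCount s (Multiset.card κ) (κ.filter (· ≠ 0)) =
      κ.countPerms * (κ.map s.choose).prod := by
  rw [gridCount, Multiset.prod_map_filter_ne (Nat.choose_zero_right s),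
    Multiset.countPerms_eq_choose_count_mul 0 κ,
    Nat.choose_symm_of_eq_add (Multiset.card_filter_ne_add_count 0 κ).symm]

theorem sum_gridCount (s P d : ℕ) :
    ∑ μ : Nat.Partition d, gridCount s P μ.parts = (s * P).choose d := by
  rw [← sum_sym_countPerms_mul_prod_choose]
  symm
  refine Finset.sum_bij_ne_zero
    (fun k hk _ => Nat.Partition.ofSums d k (Finset.mem_filter.mp hk).2)
    (fun _ _ _ => Finset.mem_univ _) ?_ ?_ ?_
  · intro k hk _ k' hk' _ h
    exact Sym.ext (Multiset.eq_of_card_eq_of_filter_ne_eq (by simp)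
      (congrArg Nat.Partition.parts h))
  · intro μ _ hμ
    obtain ⟨hcard, hle⟩ := le_of_gridCount_ne_zero hμ
    have hzero : 0 ∉ μ.parts := fun h => (μ.parts_pos h).false
    have hκ : Multiset.card (μ.parts + Multiset.replicate (P - Multiset.card μ.parts) 0) = P := by
      simp only [Multiset.card_add, Multiset.card_replicate]; omega
    refine ⟨Sym.mk _ hκ, ?_, ?_, ?_⟩
    · refine Finset.mem_filter.mpr ⟨Finset.mem_sym_iff.mpr fun i hi => ?_, ?_⟩
      · rw [Sym.mem_mk, Multiset.mem_add] at hi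
        rcases hi with hi | hi
        · exact Finset.mem_range_succ_iff.mpr (hle i hi)
        · simp [Multiset.eq_of_mem_replicate hi]
      · simp [μ.parts_sum]
    · rw [← gridCount_filter_ne_zero, Sym.coe_mk, hκ, Multiset.filter_ne_add_replicate hzero]
      exact hμ
    · exact Nat.Partition.ext (Multiset.filter_ne_add_replicate hzero _)
  · intro k hk _
    rw [Nat.Partition.ofSums_parts, ← gridCount_filter_ne_zero, Sym.card_coe]

theorem multiFactor_eq_countPerms {N : ℕ} (lam : Nat.Partition N) :
    multiFactor N lam = lam.parts.countPerms := by
  have hsub : lam.parts.toFinset ⊆ Finset.Icc 1 N := fun i hi => by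
    rw [Multiset.mem_toFinset] at hi
    exact Finset.mem_Icc.mpr ⟨lam.parts_pos hi, Nat.Partition.le_of_mem_parts hi⟩
  have hprod : ∏ i ∈ Finset.Icc 1 N, ((lam.parts.count i)! : ℚ) =
      ∏ i ∈ lam.parts.toFinset, ((lam.parts.count i)! : ℚ) :=
    (Finset.prod_subset hsub fun i _ hi => by
      rw [Multiset.count_eq_zero_of_notMem (by simpa using hi), Nat.factorial_zero,
        Nat.cast_one]).symm
  rw [multiFactor, hprod, div_eq_iff (by positivity), ← Nat.cast_prod, mul_comm,
    ← Nat.cast_mul, Multiset.prod_factorial_count_mul_countPerms]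

/-- The cutoff on the largest part is automatic: `C(r - q, j) = 0` for `j > r - q`. -/
theorem haldaneWeight_eq {q r P N : ℕ} {lam : Nat.Partition N} {κ : Multiset ℕ}
    (hκ : lam.parts = κ.map (· + 1)) :
    haldaneWeight q r P N lam =
      (P.choose (Multiset.card κ - κ.count 0) : ℚ) / (Multiset.card κ).choose (κ.count 0) *
        (κ.map (r - q).choose).prod := by
  have hcount (j : ℕ) : (κ.map (· + 1)).count (j + 1) = κ.count j :=
    Multiset.count_map_eq_count' _ _ (add_left_injective 1) j
  rw [haldaneWeight, hκ, Multiset.card_map, hcount 0]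
  simp only [Multiset.forall_mem_map_iff, hcount, add_le_add_iff_right]
  split_ifs with hle
  · have hsub : κ.toFinset ⊆ range (r - q + 1) := fun j hj =>
      mem_range_succ_iff.mpr (hle j (Multiset.mem_toFinset.mp hj))
    rw [Finset.prod_multiset_map_count, ← Finset.prod_subset hsub fun j _ hj => by
      rw [Multiset.count_eq_zero_of_notMem (by simpa using hj), pow_zero]]
    push_cast
    rfl
  · push Not at hle
    obtain ⟨j, hj, hlt⟩ := hle
    rw [Multiset.prod_eq_zero (Multiset.mem_map.mpr ⟨j, hj, Nat.choose_eq_zero_of_lt hlt⟩)]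
    simp

theorem Nat.Partition.map_sub_one_map_add_one {N : ℕ} (lam : Nat.Partition N) :
    (lam.parts.map (· - 1)).map (· + 1) = lam.parts := by
  rw [Multiset.map_map]
  conv_rhs => rw [← Multiset.map_id lam.parts]
  exact Multiset.map_congr rfl fun i hi => Nat.sub_add_cancel (lam.parts_pos hi)

theorem haldaneWeight_mul_multiFactor_s2 (q r P : ℕ) {N : ℕ} {lam : Nat.Partition N}
    {κ : Multiset ℕ} (hκ : lam.parts = κ.map (· + 1)) :
    haldaneWeight q r P N lam * multiFactor N lam = gridCount (r - q) P (κ.filter (· ≠ 0)) := by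
  have hchoose : ((Multiset.card κ).choose (κ.count 0) : ℚ) ≠ 0 :=
    Nat.cast_ne_zero.mpr (Nat.choose_pos (Multiset.count_le_card 0 κ)).ne'
  rw [haldaneWeight_eq hκ, multiFactor_eq_countPerms, hκ,
    Multiset.countPerms_map_of_injective (add_left_injective 1),
    Multiset.countPerms_eq_choose_count_mul 0 κ, gridCount,
    Multiset.prod_map_filter_ne (Nat.choose_zero_right _)]
  rw [← Multiset.card_filter_ne_add_count 0 κ, Nat.add_sub_cancel] at *
  push_cast
  field_simp

theorem sum_haldaneWeight_mul_multiFactor (q r P : ℕ) {N t : ℕ} (ht : t ≤ N) :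
    ∑ lam ∈ univ.filter (fun lam : Nat.Partition N => Multiset.card lam.parts = t),
        haldaneWeight q r P N lam * multiFactor N lam =
      ∑ μ ∈ univ.filter (fun μ : Nat.Partition (N - t) => Multiset.card μ.parts ≤ t),
        (gridCount (r - q) P μ.parts : ℚ) := by
  refine Finset.sum_bij'
    (fun lam hlam => Nat.Partition.ofSums (N - t) (lam.parts.map (· - 1)) ?sum)
    (fun μ hμ => ⟨(μ.parts + Multiset.replicate (t - Multiset.card μ.parts) 0).map (· + 1),
      fun hi => by obtain ⟨j, -, rfl⟩ := Multiset.mem_map.mp hi; exact j.succ_pos, ?sum'⟩)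
    (fun lam hlam => ?hi) (fun μ hμ => ?hj) (fun lam hlam => ?left) (fun μ hμ => ?right)
    fun lam _ => by
      exact_mod_cast haldaneWeight_mul_multiFactor_s2 q r P lam.map_sub_one_map_add_one.symm
  case sum =>
    have := congrArg Multiset.sum lam.map_sub_one_map_add_one
    rw [Multiset.sum_map_add_one, lam.parts_sum, Multiset.card_map,
      (Finset.mem_filter.mp hlam).2] at this
    omega
  case sum' =>
    have := (Finset.mem_filter.mp hμ).2
    simp only [Multiset.sum_map_add_one, Multiset.sum_add, Multiset.sum_replicate, smul_zero,
      μ.parts_sum, Multiset.card_add, Multiset.card_replicate]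
    omega
  case hi =>
    simpa [(Finset.mem_filter.mp hlam).2] using
      Multiset.card_le_card (Multiset.filter_le (· ≠ 0) (lam.parts.map (· - 1)))
  case hj =>
    have := (Finset.mem_filter.mp hμ).2
    simp only [Finset.mem_filter, Finset.mem_univ, true_and, Multiset.card_map,
      Multiset.card_add, Multiset.card_replicate]
    omega
  case left =>
    have hcount := Multiset.card_filter_ne_add_count 0 (lam.parts.map (· - 1))
    rw [Multiset.card_map, (Finset.mem_filter.mp hlam).2] at hcount
    refine Nat.Partition.ext ?_
    simp only [Nat.Partition.ofSums_parts]
    rw [← hcount, Nat.add_sub_cancel_left, Multiset.filter_ne_add_replicate_count,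
      lam.map_sub_one_map_add_one]
  case right =>
    refine Nat.Partition.ext ?_
    simp only [Nat.Partition.ofSums_parts, Multiset.map_map, Function.comp_def,
      Nat.add_sub_cancel, Multiset.map_id']
    exact Multiset.filter_ne_add_replicate (fun h => (μ.parts_pos h).false) _

theorem card_le_of_gridCount_ne_zero {s r P N t : ℕ} (hsr : s < r) (hN : N = r * P + 1)
    {μ : Nat.Partition (N - t)} (h : gridCount s P μ.parts ≠ 0) : Multiset.card μ.parts ≤ t := by
  obtain ⟨hP, hle⟩ := le_of_gridCount_ne_zero h
  have hsum := Multiset.sum_le_card_nsmul _ _ hle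
  rw [μ.parts_sum, smul_eq_mul] at hsum
  have hrP := Nat.mul_le_mul hP (Nat.succ_le_of_lt hsr)
  rw [Nat.mul_succ, mul_comm P r] at hrP
  omega

theorem stmt2_general (q r P N : ℕ) (hq : 1 ≤ q) (hqr : q ≤ r)
    (hN : N = r * P + 1) (t : ℕ) (ht : t ≤ N) :
    ∑ lam ∈ Finset.univ.filter
        (fun lam : Nat.Partition N => Multiset.card lam.parts = t),
      haldaneWeight q r P N lam * multiFactor N lam =
        (Nat.choose ((r - q) * P) (N - t) : ℚ) := by
  rw [sum_haldaneWeight_mul_multiFactor q r P ht, Finset.sum_filter_of_ne fun μ _ hμ =>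
    card_le_of_gridCount_ne_zero (s := r - q) (by omega) hN (by exact_mod_cast hμ), ← Nat.cast_sum,
    sum_gridCount]

/-- For coprime `q ≤ r` and `N = rP + 1`, for every `0 ≤ t ≤ N`, the sum of
`w(λ)·M(λ)` over partitions `λ` of `N` with exactly `t` parts equals `C((r−q)P, N − t)`.
(Under the Haldane measure, the number of occupied states is hypergeometric with
parameters `K`, `K+(r−q)P` and `N`.) -/
theorem stmt2 (q r P N : ℕ) (hq : 1 ≤ q) (hqr : q ≤ r) (hcop : Nat.Coprime q r)
    (hN : N = r * P + 1) (t : ℕ) (ht : t ≤ N) :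
    ∑ lam ∈ Finset.univ.filter
        (fun lam : Nat.Partition N => Multiset.card lam.parts = t),
      haldaneWeight q r P N lam * multiFactor N lam =
        (Nat.choose ((r - q) * P) (N - t) : ℚ) :=
  stmt2_general q r P N hq hqr hN t ht
end

section
/- Let q, r be coprime integers with 1 ≤ q ≤ r, let P ≥ 0, N = rP+1, K ≥ 1, and set G = r−q+1. Then the Haldane statistical weight is majorized by the Gentile one: C(K + (r−q)P, N) ≤ W_G(K, N), where W_G(K,N) is the coefficient of z^N in (1+z+⋯+z^G)^K. -/
/-!
Write `W(K, n)` for `gentileWeight G K n`; then `W(K+1, n)` is the sum of `W(K, i)` over the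
window `n - G ≤ i ≤ n`. For a shift `f` with `f (n+1) ≤ f n + 1`, Pascal's rule
`C(K + f n + 1, n) = C(K + f n, n - 1) + C(K + f n, n)` can be unfolded down the window for as
long as `f` keeps rising by one; if `f` rises by less than `G` over every window of length `G`,
the unfolding stops inside the window and bounds `C(K + 1 + f n, n)` by the window sum of
`C(K + f i, i)`. Induction on `K` then gives `C(K + f n, n) ≤ W(K, n)`. The Haldane shift
`f n = ⌊(r - q)(n - 1) / r⌋` qualifies with `G = r - q + 1`, and `f (rP + 1) = (r - q)P`.
-/

open Finset

/-- `gentileWeight G K N` is the coefficient of `z^N` in `(1 + z + z² + ⋯ + z^G)^K`. -/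
noncomputable def gentileWeight (G K N : ℕ) : ℕ :=
  ((∑ j ∈ Finset.range (G + 1), (Polynomial.X : Polynomial ℕ) ^ j) ^ K).coeff N

lemma gentileWeight_zero (G n : ℕ) : gentileWeight G 0 n = if n = 0 then 1 else 0 := by
  simp [gentileWeight, Polynomial.coeff_one]

lemma gentileWeight_succ (G K n : ℕ) :
    gentileWeight G (K + 1) n = ∑ i ∈ Icc (n - G) n, gentileWeight G K i := by
  rw [gentileWeight, pow_succ, Finset.mul_sum, Polynomial.finsetSum_coeff]
  simp only [Polynomial.coeff_mul_X_pow', ← sum_filter]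
  refine sum_nbij' (n - ·) (n - ·) (fun j hj => ?_) (fun i hi => ?_) (fun j hj => ?_)
    (fun i hi => ?_) (fun j _ => rfl) <;> simp only [mem_filter, mem_range, mem_Icc] at * <;> omega

section Shift

variable (f : ℕ → ℕ) (hstep : ∀ n, f (n + 1) ≤ f n + 1)
include hstep

lemma choose_add_succ_le_sum_Icc (K c n : ℕ) (h : f n + 1 ≤ f (n - c) + c) :
    (K + f n + 1).choose n ≤ ∑ i ∈ Icc (n - c) n, (K + f i).choose i := by
  induction c generalizing n with
  | zero => simp at h
  | succ c ih =>
    cases n with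
    | zero => simp
    | succ n =>
      rw [Nat.choose_succ_succ', Nat.add_sub_add_right]
      by_cases hflat : f (n + 1) ≤ f n
      · have hpair : {n, n + 1} ⊆ Icc (n - c) (n + 1) := by
          intro i; simp only [mem_insert, mem_singleton, mem_Icc]; omega
        calc (K + f (n + 1)).choose n + (K + f (n + 1)).choose (n + 1)
            ≤ (K + f n).choose n + (K + f (n + 1)).choose (n + 1) := by gcongr
          _ = ∑ i ∈ {n, n + 1}, (K + f i).choose i := by rw [sum_pair (by omega)]
          _ ≤ _ := sum_le_sum_of_subset hpair
      · have hrise : f (n + 1) = f n + 1 := by have := hstep n; omega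
        rw [sum_Icc_succ_top (by omega), hrise, ← add_assoc]
        gcongr
        exact ih n (by rw [Nat.add_sub_add_right] at h; omega)

lemma choose_add_le_gentileWeight {G : ℕ} (hlt : ∀ n, f (n + 1) ≤ n)
    (hwin : ∀ n, f n + 1 ≤ f (n - G) + G) (K n : ℕ) :
    (K + f n).choose n ≤ gentileWeight G K n := by
  induction K generalizing n with
  | zero =>
    cases n with
    | zero => simp [gentileWeight_zero]
    | succ n => simp [Nat.choose_eq_zero_of_lt (Nat.lt_succ_of_le (hlt n))]
  | succ K ih =>
    calc (K + 1 + f n).choose n = (K + f n + 1).choose n := by rw [add_right_comm]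
      _ ≤ ∑ i ∈ Icc (n - G) n, (K + f i).choose i :=
        choose_add_succ_le_sum_Icc f hstep K G n (hwin n)
      _ ≤ ∑ i ∈ Icc (n - G) n, gentileWeight G K i := sum_le_sum fun i _ => ih i
      _ = gentileWeight G (K + 1) n := (gentileWeight_succ G K n).symm

end Shift

lemma div_le_div_add_of_le_add_mul {a b r d : ℕ} (hr : 0 < r) (h : a ≤ b + r * d) :
    a / r ≤ b / r + d :=
  (Nat.div_le_div_right h).trans_eq (Nat.add_mul_div_left _ _ hr)

lemma choose_add_mul_div_le_gentileWeight {s r : ℕ} (hsr : s < r) (K n : ℕ) :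
    (K + s * (n - 1) / r).choose n ≤ gentileWeight (s + 1) K n := by
  have hr : 0 < r := by omega
  refine choose_add_le_gentileWeight (fun n => s * (n - 1) / r) (fun n => ?_) (fun n => ?_)
    (fun n => ?_) K n
  · refine div_le_div_add_of_le_add_mul hr ?_
    have : n + 1 - 1 ≤ n - 1 + 1 := by omega
    nlinarith
  · refine Nat.div_le_of_le_mul ?_
    simp only [Nat.add_sub_cancel]
    nlinarith
  · suffices s * (n - 1) / r ≤ s * (n - (s + 1) - 1) / r + s by omega
    refine div_le_div_add_of_le_add_mul hr ?_
    have : n - 1 ≤ n - (s + 1) - 1 + (s + 1) := by omega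
    nlinarith

theorem stmt8_general (q r P K N G : ℕ) (hq : 1 ≤ q) (hqr : q ≤ r)
    (hN : N = r * P + 1) (hG : G = r - q + 1) :
    Nat.choose (K + (r - q) * P) N ≤ gentileWeight G K N := by
  have hshift : (r - q) * (N - 1) / r = (r - q) * P := by
    rw [hN, Nat.add_sub_cancel, mul_left_comm, Nat.mul_div_cancel_left _ (by omega)]
  have key := choose_add_mul_div_le_gentileWeight (show r - q < r by omega) K N
  rwa [hshift, ← hG] at key

/-- For coprime `q ≤ r`, `N = rP + 1`, `K ≥ 1`, and `G = r − q + 1`, the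
Haldane statistical weight is majorized by the Gentile one:
`C(K + (r−q)P, N) ≤ W_G(K, N)`. -/
theorem stmt8 (q r P K N G : ℕ) (hq : 1 ≤ q) (hqr : q ≤ r) (hcop : Nat.Coprime q r)
    (hK : 1 ≤ K) (hN : N = r * P + 1) (hG : G = r - q + 1) :
    Nat.choose (K + (r - q) * P) N ≤ gentileWeight G K N :=
  stmt8_general q r P K N G hq hqr hN hG
end

section
/- Let G ≥ 1, K ≥ 1, and let i, N be integers with 1 ≤ i ≤ G and N ≥ i. Then Σ k_i · K! / (k_1!⋯k_G!·(K − k_1 − … − k_G)!) = K · W_G(K−1, N−i), where the sum runs over all G-tuples (k_1, …, k_G) of non-negative integers with k_1 + 2k_2 + … + G·k_G = N and k_1 + … + k_G ≤ K. Equivalently, the mean number of states occupied by exactly i particles under the Gentile measure is ⟨k_i⟩ = K · W_G(K−1, N−i) / W_G(K, N) whenever W_G(K,N) ≠ 0. -/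
/-!
Write `k₀ = K - ∑ kⱼ` for the number of empty states. The multinomial theorem applied to
`(z⁰ + z¹ + ⋯ + z^G)^K` shows that `W_G(K, N)` is the sum of the multiplicities
`m_K(k) = K! / (k₀! k₁! ⋯ k_G!)` over the occupations `k = (k₁, …, k_G)` of the theorem.
Removing one state holding `i` particles, `k ↦ k - eᵢ`, is a bijection from the occupations of
`(K, N)` with `kᵢ ≠ 0` onto all occupations of `(K - 1, N - i)`, and
`kᵢ · m_K(k) = K · m_{K-1}(k - eᵢ)`.
-/

open Finset

def gentileOccupations (G K N : ℕ) : Finset (Fin G → ℕ) :=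
  (Fintype.piFinset fun _ : Fin G => Finset.range (N + 1)).filter
    (fun l => (∑ j, (j.1 + 1) * l j) = N ∧ (∑ j, l j) ≤ K)

noncomputable def gentileMultiplicity {ι : Type*} [Fintype ι] (K : ℕ) (l : ι → ℕ) : ℚ :=
  (K.factorial : ℚ) / ((∏ j, ((l j).factorial : ℚ)) * ((K - ∑ j, l j).factorial : ℚ))

theorem gentileMultiplicity_pos {ι : Type*} [Fintype ι] (K : ℕ) (l : ι → ℕ) :
    0 < gentileMultiplicity K l := by
  unfold gentileMultiplicity
  positivity

theorem mem_gentileOccupations {G K N : ℕ} {l : Fin G → ℕ} :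
    l ∈ gentileOccupations G K N ↔ ∑ j, (j.1 + 1) * l j = N ∧ ∑ j, l j ≤ K := by
  rw [gentileOccupations, mem_filter, Fintype.mem_piFinset, and_iff_right_iff_imp]
  rintro ⟨rfl, -⟩ j
  exact mem_range_succ_iff.2 <| (Nat.le_mul_of_pos_left _ j.1.succ_pos).trans <|
    single_le_sum (f := fun j : Fin G => (j.1 + 1) * l j) (fun _ _ => Nat.zero_le _) (mem_univ j)

theorem gentileWeight_eq_sum_multinomial (G K N : ℕ) :
    gentileWeight G K N = ∑ k ∈ (piAntidiag (univ : Finset (Fin (G + 1))) K).filter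
        (fun k => ∑ j : Fin (G + 1), (j : ℕ) * k j = N), Nat.multinomial univ k := by
  rw [gentileWeight, ← Fin.sum_univ_eq_sum_range (fun j => (Polynomial.X : Polynomial ℕ) ^ j),
    sum_pow_eq_sum_piAntidiag, Polynomial.finsetSum_coeff, sum_filter]
  refine sum_congr rfl fun k _ => ?_
  simp_rw [← pow_mul, prod_pow_eq_pow_sum, Polynomial.coeff_natCast_mul, Polynomial.coeff_X_pow]
  simp [eq_comm]

theorem mem_piAntidiag_univ_fin_succ {G K : ℕ} {k : Fin (G + 1) → ℕ} :
    k ∈ piAntidiag univ K ↔ ∑ j, Fin.tail k j ≤ K ∧ k 0 = K - ∑ j, Fin.tail k j := by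
  rw [mem_piAntidiag, Fin.sum_univ_succ]
  simp only [mem_univ, implies_true, and_true, Fin.tail]
  omega

theorem sum_val_mul_fin_succ {G : ℕ} (k : Fin (G + 1) → ℕ) :
    ∑ j : Fin (G + 1), (j : ℕ) * k j = ∑ j : Fin G, (j.1 + 1) * Fin.tail k j := by
  simp [Fin.sum_univ_succ, Fin.tail]

theorem multinomial_cons_eq_gentileMultiplicity {G K : ℕ} (l : Fin G → ℕ)
    (h : ∑ j, l j ≤ K) :
    (Nat.multinomial univ (Fin.cons (K - ∑ j, l j) l : Fin (G + 1) → ℕ) : ℚ) =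
      gentileMultiplicity K l := by
  have hspec := Nat.multinomial_spec univ (Fin.cons (K - ∑ j, l j) l : Fin (G + 1) → ℕ)
  rw [Fin.prod_univ_succ, Fin.sum_univ_succ] at hspec
  simp only [Fin.cons_zero, Fin.cons_succ, Nat.sub_add_cancel h] at hspec
  rw [gentileMultiplicity, eq_div_iff (by positivity), ← hspec]
  push_cast
  ring

theorem gentileWeight_eq_sum_gentileMultiplicity (G K N : ℕ) :
    (gentileWeight G K N : ℚ) = ∑ l ∈ gentileOccupations G K N, gentileMultiplicity K l := by
  rw [gentileWeight_eq_sum_multinomial, Nat.cast_sum]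
  refine sum_nbij' Fin.tail (fun l => Fin.cons (K - ∑ j, l j) l) ?_ ?_ ?_ ?_ ?_
  · intro k hk
    simp only [mem_filter, mem_piAntidiag_univ_fin_succ, sum_val_mul_fin_succ] at hk
    exact mem_gentileOccupations.2 ⟨hk.2, hk.1.1⟩
  · intro l hl
    rw [mem_gentileOccupations] at hl
    simp only [mem_filter, mem_piAntidiag_univ_fin_succ, sum_val_mul_fin_succ, Fin.tail_cons,
      Fin.cons_zero]
    exact ⟨⟨hl.2, trivial⟩, hl.1⟩
  · intro k hk
    simp only [mem_filter, mem_piAntidiag_univ_fin_succ] at hk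
    rw [← hk.1.2, Fin.cons_self_tail]
  · intro l _
    exact Fin.tail_cons _ _
  · intro k hk
    simp only [mem_filter, mem_piAntidiag_univ_fin_succ] at hk
    rw [← multinomial_cons_eq_gentileMultiplicity _ hk.1.1, ← hk.1.2, Fin.cons_self_tail]

section AddSingle

variable {ι : Type*} [DecidableEq ι]

theorem sum_add_single [Fintype ι] (l : ι → ℕ) (a : ι) :
    ∑ j, (l + Pi.single a 1 : ι → ℕ) j = ∑ j, l j + 1 := by
  simp [sum_add_distrib]

theorem prod_factorial_add_single [Fintype ι] (l : ι → ℕ) (a : ι) :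
    ∏ j, (((l + Pi.single a 1 : ι → ℕ) j).factorial : ℚ) =
      (l a + 1) * ∏ j, ((l j).factorial : ℚ) := by
  have h (j : ι) : (((l + Pi.single a 1 : ι → ℕ) j).factorial : ℚ) =
      (Pi.mulSingle a ((l a + 1 : ℕ) : ℚ) : ι → ℚ) j * (l j).factorial := by
    obtain rfl | hj := eq_or_ne j a
    · simp [Nat.factorial_succ]
    · simp [hj]
  rw [prod_congr rfl fun j _ => h j, prod_mul_distrib, prod_pi_mulSingle']
  simp

theorem add_one_mul_gentileMultiplicity_add_single [Fintype ι] (K : ℕ) (l : ι → ℕ)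
    (a : ι) :
    (l a + 1 : ℚ) * gentileMultiplicity (K + 1) (l + Pi.single a 1) =
      (K + 1) * gentileMultiplicity K l := by
  rw [gentileMultiplicity, gentileMultiplicity, sum_add_single, prod_factorial_add_single,
    Nat.add_sub_add_right, Nat.factorial_succ]
  have : (l a : ℚ) + 1 ≠ 0 := by positivity
  field_simp
  push_cast
  ring

theorem sub_single_add_single {l : ι → ℕ} {a : ι} (h : l a ≠ 0) :
    l - Pi.single a 1 + Pi.single a 1 = l := by
  funext j
  obtain rfl | hj := eq_or_ne j a
  · simp only [Pi.add_apply, Pi.sub_apply, Pi.single_eq_same]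
    omega
  · simp [hj]

end AddSingle

theorem add_single_mem_gentileOccupations_iff {G K N : ℕ} {l : Fin G → ℕ} {a : Fin G} :
    l + Pi.single a 1 ∈ gentileOccupations G (K + 1) (N + (a + 1)) ↔
      l ∈ gentileOccupations G K N := by
  simp only [mem_gentileOccupations, Pi.add_apply, mul_add, sum_add_distrib]
  simp [Pi.single_apply]

theorem sum_mul_gentileMultiplicity_eq (G K N : ℕ) (a : Fin G) :
    ∑ l ∈ gentileOccupations G (K + 1) (N + (a + 1)),
        (l a : ℚ) * gentileMultiplicity (K + 1) l =
      (K + 1) * ∑ l ∈ gentileOccupations G K N, gentileMultiplicity K l := by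
  rw [mul_sum]
  symm
  refine sum_bij_ne_zero (fun l _ _ => l + Pi.single a 1)
    (fun l hl _ => add_single_mem_gentileOccupations_iff.2 hl)
    (fun _ _ _ _ _ _ h => add_right_cancel h) ?_ ?_
  · intro l hl hne
    have hla : l a ≠ 0 := by rintro h; simp [h] at hne
    refine ⟨l - Pi.single a 1, ?_, ?_, sub_single_add_single hla⟩
    · rwa [← add_single_mem_gentileOccupations_iff, sub_single_add_single hla]
    · exact mul_ne_zero (by positivity) (gentileMultiplicity_pos K _).ne'
  · intro l _ _
    rw [← add_one_mul_gentileMultiplicity_add_single K l a]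
    simp

/-- For `G ≥ 1`, `K ≥ 1`, `1 ≤ i ≤ G` and `N ≥ i`:
`Σ kᵢ · K!/(k₁!⋯k_G!·(K − Σⱼ kⱼ)!) = K · W_G(K−1, N−i)`, the sum running over all
`G`-tuples `(k₁, …, k_G)` of non-negative integers with `Σⱼ j·kⱼ = N` and `Σⱼ kⱼ ≤ K`;
i.e. the Gentile-measure mean number of states occupied by exactly `i` particles is
`⟨kᵢ⟩ = K · W_G(K−1, N−i) / W_G(K, N)`. -/
theorem stmt10 (G K i N : ℕ) (hK : 1 ≤ K) (hi1 : 1 ≤ i) (hiG : i ≤ G)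
    (hN : i ≤ N) :
    ∑ l ∈ (Fintype.piFinset fun _ : Fin G => Finset.range (N + 1)).filter
        (fun l => (∑ j, (j.1 + 1) * l j) = N ∧ (∑ j, l j) ≤ K),
      (l ⟨i - 1, by omega⟩ : ℚ) *
        ((Nat.factorial K : ℚ) /
          ((∏ j, (Nat.factorial (l j) : ℚ)) * (Nat.factorial (K - ∑ j, l j) : ℚ))) =
      (K : ℚ) * (gentileWeight G (K - 1) (N - i) : ℚ) := by
  obtain ⟨K, rfl⟩ := Nat.exists_eq_add_of_le' hK
  obtain ⟨N, rfl⟩ := Nat.exists_eq_add_of_le' hN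
  set a : Fin G := ⟨i - 1, by omega⟩
  have hi : i = a + 1 := by simp only [a]; omega
  change ∑ l ∈ gentileOccupations G (K + 1) (N + i),
    (l a : ℚ) * gentileMultiplicity (K + 1) l = _
  rw [Nat.add_sub_cancel, Nat.add_sub_cancel, gentileWeight_eq_sum_gentileMultiplicity, hi]
  exact_mod_cast sum_mul_gentileMultiplicity_eq G K N a
end

section
/- Let G ≥ 1 be an integer and ρ a real number with 0 < ρ < 1. Then there exists a unique real number t > 0 such that Σ_{j=1}^{G} j·t^j = Gρ · Σ_{j=0}^{G} t^j. (Equivalently, equation Gρ = t(1−(G+1)t^G+G·t^{G+1})/((1−t)(1−t^{G+1})) has a unique positive solution.) -/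
/-!
Write `a = Gρ ∈ (0, G)`; the equation says `F t = ∑_{j=0}^{G} (j - a) t ^ j = 0`.
Since `F 0 = -a < 0` and the leading coefficient `G - a` is positive, `F` has a positive root
by the intermediate value theorem. The coefficients of `F` change sign only once, at `a`, so
`t ^ (-a) * F t = ∑ (j - a) t ^ (j - a)` is a sum of nondecreasing functions on `(0, ∞)`, the
`j = 0` one strictly increasing; hence the positive root is unique.
-/

open Finset

lemma mul_rpow_le_mul_rpow {c e s t : ℝ} (hce : 0 ≤ c * e) (hs : 0 < s) (hst : s ≤ t) :
    c * s ^ e ≤ c * t ^ e := by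
  rcases lt_trichotomy e 0 with he | rfl | he
  · exact mul_le_mul_of_nonpos_left (Real.rpow_le_rpow_of_nonpos hs hst he.le)
      (nonpos_of_mul_nonneg_left hce he)
  · simp
  · exact mul_le_mul_of_nonneg_left (Real.rpow_le_rpow hs.le hst he.le)
      (nonneg_of_mul_nonneg_left hce he)

lemma mul_rpow_lt_mul_rpow {c e s t : ℝ} (hce : 0 < c * e) (hs : 0 < s) (hst : s < t) :
    c * s ^ e < c * t ^ e := by
  rcases pos_and_pos_or_neg_and_neg_of_mul_pos hce with ⟨hc, he⟩ | ⟨hc, he⟩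
  · exact mul_lt_mul_of_pos_left (Real.rpow_lt_rpow hs.le hst he) hc
  · exact mul_lt_mul_of_neg_left (Real.rpow_lt_rpow_of_neg hs hst he) hc

lemma strictMonoOn_sum_mul_rpow_sub {s : Finset ℕ} {c : ℕ → ℝ} {a : ℝ}
    (hc : ∀ j ∈ s, 0 ≤ c j * (j - a)) (hpos : ∃ j ∈ s, 0 < c j * (j - a)) :
    StrictMonoOn (fun t : ℝ => ∑ j ∈ s, c j * t ^ ((j : ℝ) - a)) (Set.Ioi 0) := by
  intro u hu v _ huv
  obtain ⟨k, hks, hk⟩ := hpos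
  exact sum_lt_sum (fun j hj => mul_rpow_le_mul_rpow (hc j hj) hu huv.le)
    ⟨k, hks, mul_rpow_lt_mul_rpow hk hu huv⟩

lemma sum_mul_pow_eq_rpow_mul_sum {s : Finset ℕ} (c : ℕ → ℝ) (a : ℝ) {t : ℝ} (ht : 0 < t) :
    ∑ j ∈ s, c j * t ^ j = t ^ a * ∑ j ∈ s, c j * t ^ ((j : ℝ) - a) := by
  rw [mul_sum]
  refine sum_congr rfl fun j _ => ?_
  rw [Real.rpow_sub ht, Real.rpow_natCast]
  field_simp

lemma eq_of_sum_mul_pow_eq_zero {s : Finset ℕ} {c : ℕ → ℝ} {a : ℝ}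
    (hc : ∀ j ∈ s, 0 ≤ c j * (j - a)) (hpos : ∃ j ∈ s, 0 < c j * (j - a))
    {u v : ℝ} (hu : 0 < u) (hv : 0 < v)
    (hu0 : ∑ j ∈ s, c j * u ^ j = 0) (hv0 : ∑ j ∈ s, c j * v ^ j = 0) : u = v := by
  refine (strictMonoOn_sum_mul_rpow_sub hc hpos).injOn hu hv ?_
  rw [sum_mul_pow_eq_rpow_mul_sum c a hu, mul_eq_zero] at hu0
  rw [sum_mul_pow_eq_rpow_mul_sum c a hv, mul_eq_zero] at hv0
  simp only [(Real.rpow_pos_of_pos hu a).ne', (Real.rpow_pos_of_pos hv a).ne', false_or] at hu0 hv0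
  rw [hu0, hv0]

lemma exists_sum_range_mul_pow_pos {n : ℕ} {c : ℕ → ℝ} (hn : 0 < c n) :
    ∃ T > 0, 0 < ∑ j ∈ range (n + 1), c j * T ^ j := by
  -- with this witness the geometric sum gives `(T - 1) * ∑ c j * T ^ j ≥ T ^ n + b`
  set b := ∑ j ∈ range n, |c j|
  set T := 1 + (b + 1) / c n
  have hb : 0 ≤ b := sum_nonneg fun j _ => abs_nonneg (c j)
  have hT : 0 < T - 1 := by simp only [T, add_sub_cancel_left]; positivity
  have hlow : -(b * ∑ j ∈ range n, T ^ j) ≤ ∑ j ∈ range n, c j * T ^ j := by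
    rw [← neg_mul, mul_sum]
    refine sum_le_sum fun j hj => mul_le_mul_of_nonneg_right ?_ (by positivity)
    linarith [neg_abs_le (c j), single_le_sum (fun i _ => abs_nonneg (c i)) hj]
  have hgeom := geom_sum_mul T n
  have hcT : c n * (T - 1) = b + 1 := by simp only [T]; field_simp; ring
  refine ⟨T, by linarith, pos_of_mul_pos_right (a := T - 1) ?_ hT.le⟩
  rw [sum_range_succ]
  nlinarith [pow_pos (show 0 < T by linarith) n]

lemma exists_pos_sum_range_mul_pow_eq_zero {n : ℕ} {c : ℕ → ℝ} (h0 : c 0 < 0) (hn : 0 < c n) :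
    ∃ t > 0, ∑ j ∈ range (n + 1), c j * t ^ j = 0 := by
  obtain ⟨T, hT, hFT⟩ := exists_sum_range_mul_pow_pos hn
  have hF0 : ∑ j ∈ range (n + 1), c j * (0 : ℝ) ^ j = c 0 := by simp [sum_range_succ']
  have hcont : Continuous fun t : ℝ => ∑ j ∈ range (n + 1), c j * t ^ j := by fun_prop
  obtain ⟨t, ht, hFt⟩ := intermediate_value_Ioo hT.le hcont.continuousOn
    (show (0 : ℝ) ∈ Set.Ioo _ _ from ⟨hF0 ▸ h0, hFT⟩)
  exact ⟨t, ht.1, hFt⟩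

lemma sum_Icc_one_eq_sum_range_succ {M : Type*} [AddCommMonoid M] (n : ℕ) {f : ℕ → M}
    (hf : f 0 = 0) : ∑ j ∈ Icc 1 n, f j = ∑ j ∈ range (n + 1), f j := by
  refine sum_subset (fun j hj => by simp only [mem_Icc, mem_range] at hj ⊢; omega)
    fun j hj hj' => ?_
  obtain rfl : j = 0 := by simp only [mem_Icc, mem_range, not_and, not_le] at hj hj'; omega
  exact hf

/-- For an integer `G ≥ 1` and a real `0 < ρ < 1`, there exists a unique
real `t > 0` such that `Σ_{j=1}^{G} j·t^j = Gρ · Σ_{j=0}^{G} t^j`. -/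
theorem stmt12 (G : ℕ) (hG : 1 ≤ G) (ρ : ℝ) (hρ0 : 0 < ρ) (hρ1 : ρ < 1) :
    ∃! t : ℝ, 0 < t ∧
      ∑ j ∈ Finset.Icc 1 G, (j : ℝ) * t ^ j =
        (G : ℝ) * ρ * ∑ j ∈ Finset.range (G + 1), t ^ j := by
  set a := (G : ℝ) * ρ
  have hG0 : (0 : ℝ) < G := by exact_mod_cast hG
  have ha : 0 < a := by positivity
  have haG : a < G := by simpa [a] using mul_lt_mul_of_pos_left hρ1 hG0
  have hequiv (t : ℝ) : ∑ j ∈ Icc 1 G, (j : ℝ) * t ^ j = a * ∑ j ∈ range (G + 1), t ^ j ↔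
      ∑ j ∈ range (G + 1), ((j : ℝ) - a) * t ^ j = 0 := by
    rw [sum_Icc_one_eq_sum_range_succ G (f := fun j => (j : ℝ) * t ^ j) (by simp)]
    simp only [sub_mul, sum_sub_distrib, ← mul_sum, sub_eq_zero]
  have hsign : ∀ j ∈ range (G + 1), 0 ≤ ((j : ℝ) - a) * (j - a) := fun j _ => mul_self_nonneg _
  have hsign0 : ∃ j ∈ range (G + 1), 0 < ((j : ℝ) - a) * (j - a) :=
    ⟨0, by simp, by simpa using mul_pos ha ha⟩
  obtain ⟨t, ht, hFt⟩ := exists_pos_sum_range_mul_pow_eq_zero (c := fun j => (j : ℝ) - a)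
    (by simpa using ha) (by simpa using haG)
  refine ⟨t, ⟨ht, (hequiv t).2 hFt⟩, fun s ⟨hs, hFs⟩ => ?_⟩
  exact eq_of_sum_mul_pow_eq_zero hsign hsign0 hs ht ((hequiv s).1 hFs) hFt
end

section
/- Let G ≥ 1 be an integer, ρ a real number, and x > 0 a real number satisfying Σ_{j=1}^{G} j·x^j = Gρ · Σ_{j=0}^{G} x^j. Then y = 1/x satisfies Σ_{j=1}^{G} j·y^j = G(1−ρ) · Σ_{j=0}^{G} y^j, and for every integer 0 ≤ i ≤ G one has y^i / Σ_{j=0}^{G} y^j = x^{G−i} / Σ_{j=0}^{G} x^j. (This is the duality κ_i(1−ρ) = κ_{G−i}(ρ) for the limiting occupation fractions.) -/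
/-! Multiplying by `x ^ G` reverses coefficients, since `(1 / x) ^ j * x ^ G = x ^ (G - j)`.
Hence `Σ (1/x)^j = x^{-G} Σ x^j`, and the weight `j` becomes `G - j`, which turns `Gρ` into
`G - Gρ = G(1 - ρ)`. -/

open Finset

section Reflection

variable {K : Type*} [Field K] {x : K}

lemma one_div_pow_mul_pow_of_le (hx : x ≠ 0) {i n : ℕ} (h : i ≤ n) :
    (1 / x) ^ i * x ^ n = x ^ (n - i) := by
  rw [← pow_sub_mul_pow x h, mul_left_comm, ← mul_pow, one_div_mul_cancel hx, one_pow, mul_one]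

lemma sum_range_mul_one_div_pow_mul_pow (hx : x ≠ 0) (f : ℕ → K) (n : ℕ) :
    (∑ j ∈ range (n + 1), f j * (1 / x) ^ j) * x ^ n =
      ∑ j ∈ range (n + 1), f (n - j) * x ^ j := by
  rw [sum_mul, ← sum_range_reflect (fun j => f (n - j) * x ^ j)]
  refine sum_congr rfl fun j hj => ?_
  have hjn : j ≤ n := Nat.lt_succ_iff.mp (mem_range.mp hj)
  rw [add_tsub_cancel_right, Nat.sub_sub_self hjn, mul_assoc,
    one_div_pow_mul_pow_of_le hx hjn]

lemma sum_range_one_div_pow_mul_pow (hx : x ≠ 0) (n : ℕ) :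
    (∑ j ∈ range (n + 1), (1 / x) ^ j) * x ^ n = ∑ j ∈ range (n + 1), x ^ j := by
  simpa using sum_range_mul_one_div_pow_mul_pow hx (fun _ => 1) n

lemma sum_range_natCast_mul_one_div_pow_mul_pow (hx : x ≠ 0) (n : ℕ) :
    (∑ j ∈ range (n + 1), (j : K) * (1 / x) ^ j) * x ^ n =
      n * ∑ j ∈ range (n + 1), x ^ j - ∑ j ∈ range (n + 1), (j : K) * x ^ j := by
  rw [sum_range_mul_one_div_pow_mul_pow hx, mul_sum, ← sum_sub_distrib]
  refine sum_congr rfl fun j hj => ?_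
  rw [Nat.cast_sub (Nat.lt_succ_iff.mp (mem_range.mp hj))]
  ring

end Reflection

lemma sum_Icc_one_natCast_mul_pow {R : Type*} [Semiring R] (y : R) (n : ℕ) :
    ∑ j ∈ Icc 1 n, (j : R) * y ^ j = ∑ j ∈ range (n + 1), (j : R) * y ^ j := by
  rw [range_eq_Ico, sum_eq_sum_Ico_succ_bot n.succ_pos, Nat.succ_eq_add_one, Ico_add_one_right_eq_Icc]
  simp

theorem stmt13_general (G : ℕ) (ρ x : ℝ) (hx : 0 < x)
    (heq : ∑ j ∈ Finset.Icc 1 G, (j : ℝ) * x ^ j =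
      (G : ℝ) * ρ * ∑ j ∈ Finset.range (G + 1), x ^ j) :
    (∑ j ∈ Finset.Icc 1 G, (j : ℝ) * (1 / x) ^ j =
        (G : ℝ) * (1 - ρ) * ∑ j ∈ Finset.range (G + 1), (1 / x) ^ j) ∧
      ∀ i : ℕ, i ≤ G →
        (1 / x) ^ i / (∑ j ∈ Finset.range (G + 1), (1 / x) ^ j) =
          x ^ (G - i) / (∑ j ∈ Finset.range (G + 1), x ^ j) := by
  have hxG : x ^ G ≠ 0 := pow_ne_zero G hx.ne'
  have hgeom := sum_range_one_div_pow_mul_pow hx.ne' G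
  refine ⟨?_, fun i hi => ?_⟩
  · rw [sum_Icc_one_natCast_mul_pow] at heq ⊢
    apply mul_right_cancel₀ hxG
    rw [sum_range_natCast_mul_one_div_pow_mul_pow hx.ne', mul_assoc, hgeom, heq]
    ring
  · rw [eq_div_of_mul_eq hxG hgeom, div_div_eq_mul_div,
      one_div_pow_mul_pow_of_le hx.ne' hi]

/-- **duality `κᵢ(1−ρ) = κ_{G−i}(ρ)`.** Let `G ≥ 1`, `ρ` real, and `x > 0`
with `Σ_{j=1}^{G} j·x^j = Gρ·Σ_{j=0}^{G} x^j`. Then `y = 1/x` satisfies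
`Σ_{j=1}^{G} j·y^j = G(1−ρ)·Σ_{j=0}^{G} y^j`, and for every `0 ≤ i ≤ G`,
`y^i / Σ_{j=0}^{G} y^j = x^{G−i} / Σ_{j=0}^{G} x^j`. -/
theorem stmt13 (G : ℕ) (hG : 1 ≤ G) (ρ x : ℝ) (hx : 0 < x)
    (heq : ∑ j ∈ Finset.Icc 1 G, (j : ℝ) * x ^ j =
      (G : ℝ) * ρ * ∑ j ∈ Finset.range (G + 1), x ^ j) :
    (∑ j ∈ Finset.Icc 1 G, (j : ℝ) * (1 / x) ^ j =
        (G : ℝ) * (1 - ρ) * ∑ j ∈ Finset.range (G + 1), (1 / x) ^ j) ∧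
      ∀ i : ℕ, i ≤ G →
        (1 / x) ^ i / (∑ j ∈ Finset.range (G + 1), (1 / x) ^ j) =
          x ^ (G - i) / (∑ j ∈ Finset.range (G + 1), x ^ j) :=
  stmt13_general G ρ x hx heq
end

section
/- Let ρ be a real number with 0 < ρ < 1 and let x > 0 satisfy x + 2x² = 2ρ(1 + x + x²) (the case G = 2). Then x/(1+x+x²) = −1/3 + (1/3)·√(1 + 12ρ − 12ρ²) and x²/(1+x+x²) = 1/6 + ρ − (1/6)·√(1 + 12ρ − 12ρ²); consequently 1/(1+x+x²) = 7/6 − ρ − (1/6)·√(1 + 12ρ − 12ρ²). -/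
/-!
Write `κᵢ = xⁱ/(1+x+x²)`. These fractions sum to one, the constraint on `x` says their mean
`κ₁ + 2κ₂` is `2ρ`, and they form a geometric progression, `κ₁² = κ₀κ₂`. Eliminating `κ₀` and
`κ₂` leaves the quadratic `(3κ₁ + 1)² = 1 + 12ρ - 12ρ²`, whose root with `κ₁ ≥ 0` is the
claimed one; `κ₂` and `κ₀` then follow linearly.
-/

theorem occupation_eq_of_geometric_of_mean {k₀ k₁ k₂ ρ : ℝ} (hsum : k₀ + k₁ + k₂ = 1)
    (hmean : k₁ + 2 * k₂ = 2 * ρ) (hgeom : k₁ ^ 2 = k₀ * k₂) (hk₁ : 0 ≤ k₁) :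
    k₁ = -1 / 3 + (1 / 3) * Real.sqrt (1 + 12 * ρ - 12 * ρ ^ 2) ∧
      k₂ = 1 / 6 + ρ - (1 / 6) * Real.sqrt (1 + 12 * ρ - 12 * ρ ^ 2) ∧
      k₀ = 7 / 6 - ρ - (1 / 6) * Real.sqrt (1 + 12 * ρ - 12 * ρ ^ 2) := by
  have hquad : (3 * k₁ + 1) ^ 2 = 1 + 12 * ρ - 12 * ρ ^ 2 := by
    linear_combination 12 * hgeom + 12 * k₂ * hsum + (6 - 3 * (k₁ + 2 * k₂ + 2 * ρ)) * hmean
  have hroot : Real.sqrt (1 + 12 * ρ - 12 * ρ ^ 2) = 3 * k₁ + 1 := by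
    rw [← hquad, Real.sqrt_sq (by linarith)]
  rw [hroot]
  refine ⟨by ring, by linarith, by linarith⟩

theorem stmt14_general (ρ x : ℝ) (hx : 0 < x)
    (heq : x + 2 * x ^ 2 = 2 * ρ * (1 + x + x ^ 2)) :
    x / (1 + x + x ^ 2) = -1 / 3 + (1 / 3) * Real.sqrt (1 + 12 * ρ - 12 * ρ ^ 2) ∧
      x ^ 2 / (1 + x + x ^ 2) = 1 / 6 + ρ - (1 / 6) * Real.sqrt (1 + 12 * ρ - 12 * ρ ^ 2) ∧
      1 / (1 + x + x ^ 2) = 7 / 6 - ρ - (1 / 6) * Real.sqrt (1 + 12 * ρ - 12 * ρ ^ 2) := by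
  have hs : 1 + x + x ^ 2 ≠ 0 := by positivity
  apply occupation_eq_of_geometric_of_mean
  · field_simp
  · field_simp
    linarith
  · field_simp
  · positivity

/-- **Gentile statistics of order `G = 2`.** For `0 < ρ < 1` and `x > 0` with
`x + 2x² = 2ρ(1 + x + x²)`, the limiting occupation fractions are
`κ₁ = x/(1+x+x²) = −1/3 + (1/3)√(1+12ρ−12ρ²)`,
`κ₂ = x²/(1+x+x²) = 1/6 + ρ − (1/6)√(1+12ρ−12ρ²)`, and
`κ₀ = 1/(1+x+x²) = 7/6 − ρ − (1/6)√(1+12ρ−12ρ²)`. -/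
theorem stmt14 (ρ x : ℝ) (hρ0 : 0 < ρ) (hρ1 : ρ < 1) (hx : 0 < x)
    (heq : x + 2 * x ^ 2 = 2 * ρ * (1 + x + x ^ 2)) :
    x / (1 + x + x ^ 2) = -1 / 3 + (1 / 3) * Real.sqrt (1 + 12 * ρ - 12 * ρ ^ 2) ∧
      x ^ 2 / (1 + x + x ^ 2) = 1 / 6 + ρ - (1 / 6) * Real.sqrt (1 + 12 * ρ - 12 * ρ ^ 2) ∧
      1 / (1 + x + x ^ 2) = 7 / 6 - ρ - (1 / 6) * Real.sqrt (1 + 12 * ρ - 12 * ρ ^ 2) :=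
  stmt14_general ρ x hx heq
end

section
/- Let q ≥ 1 be an integer, r = q+1 (so r−q = 1, the 'semionic family'), P ≥ 0, N = rP+1, and let K be an integer with K ≥ qP + 1. Then under the Haldane probability measure the mean number of doubly occupied states is ⟨k_2⟩ = Σ_{λ ⊢ N} k_2(λ)·ℙ(λ) = N·P/(K+P), and the mean number of singly occupied states is ⟨k_1⟩ = Σ_{λ ⊢ N} k_1(λ)·ℙ(λ) = N·(K−P)/(K+P). -/
open Finset

/-- The Haldane probability of a partition `λ` of `N`:
`ℙ(λ) = w(λ)·M(λ)·C(K, ℓ(λ)) / C(K+(r−q)P, N)`. -/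
def haldaneProb (q r P K N : ℕ) (lam : Nat.Partition N) : ℚ :=
  haldaneWeight q r P N lam * multiFactor N lam *
      (Nat.choose K (Multiset.card lam.parts) : ℚ) /
    (Nat.choose (K + (r - q) * P) N : ℚ)

/-!
For `r = q + 1` only parts `1` and `2` have nonzero weight, so a partition is determined by
`m = k₂(λ)`, with `k₁(λ) = N - 2m` and `ℓ(λ) = N - m`. The factor `C(N - m, m)` in the
denominator of `w(λ)` cancels the multinomial factor, leaving `ℙ(λ) = C(P, m) C(K, N - m) /
C(K + P, N)`: `k₂` is hypergeometrically distributed (`N` draws from `P` marked and `K`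
unmarked states), with mean `N P / (K + P)` by Vandermonde's identity, and
`⟨k₁⟩ = N - 2⟨k₂⟩`. Since `N = (q + 1)P + 1 ≥ 2P + 1`, every `m ≤ P` is attained by a
partition, so the sum over partitions is the full hypergeometric sum.
-/

theorem Nat.sum_range_choose_mul_choose (a b n : ℕ) :
    ∑ m ∈ range (n + 1), a.choose m * b.choose (n - m) = (a + b).choose n := by
  rw [Nat.add_choose_eq, Finset.Nat.sum_antidiagonal_eq_sum_range_succ_mk]

theorem Nat.sum_range_mul_choose_succ_mul_choose (a b n : ℕ) :
    ∑ m ∈ range (n + 2), m * ((a + 1).choose m * b.choose (n + 1 - m))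
      = (a + 1) * (a + b).choose n := by
  have hterm (m : ℕ) : (m + 1) * ((a + 1).choose (m + 1) * b.choose (n + 1 - (m + 1)))
      = (a + 1) * (a.choose m * b.choose (n - m)) := by
    rw [Nat.add_sub_add_right, ← mul_assoc, mul_comm (m + 1), ← Nat.add_one_mul_choose_eq,
      mul_assoc]
  simp only [Finset.sum_range_succ' _ (n + 1), hterm, ← Finset.mul_sum,
    Nat.sum_range_choose_mul_choose, zero_mul, add_zero]

theorem Nat.add_mul_sum_range_mul_choose_mul_choose (a b n : ℕ) :
    (a + b) * ∑ m ∈ range (n + 1), m * (a.choose m * b.choose (n - m))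
      = a * n * (a + b).choose n := by
  rcases n with _ | n
  · simp
  rcases a with _ | a
  · simp [Finset.sum_range_succ']
  rw [Nat.sum_range_mul_choose_succ_mul_choose, show a + 1 + b = a + b + 1 by ring,
    mul_left_comm, Nat.add_one_mul_choose_eq]
  ring

def hypergeomProb (a b n m : ℕ) : ℚ :=
  (a.choose m * b.choose (n - m) : ℚ) / (a + b).choose n

theorem sum_hypergeomProb {a b n : ℕ} (h : n ≤ a + b) :
    ∑ m ∈ range (n + 1), hypergeomProb a b n m = 1 := by
  have hpos : ((a + b).choose n : ℚ) ≠ 0 := by exact_mod_cast (Nat.choose_pos h).ne'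
  simp only [hypergeomProb, ← Finset.sum_div]
  rw [div_eq_one_iff_eq hpos]
  exact_mod_cast Nat.sum_range_choose_mul_choose a b n

theorem sum_mul_hypergeomProb {a b n : ℕ} (h : n ≤ a + b) :
    ∑ m ∈ range (n + 1), m * hypergeomProb a b n m = n * a / (a + b) := by
  have hpos : ((a + b).choose n : ℚ) ≠ 0 := by exact_mod_cast (Nat.choose_pos h).ne'
  rcases (a + b).eq_zero_or_pos with hab | hab
  · obtain ⟨rfl, rfl⟩ := Nat.add_eq_zero_iff.mp hab
    obtain rfl : n = 0 := by omega
    simp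
  have hab' : (a + b : ℚ) ≠ 0 := by exact_mod_cast hab.ne'
  have key : ((a + b : ℕ) : ℚ) * ∑ m ∈ range (n + 1),
      (m * (a.choose m * b.choose (n - m)) : ℚ) = a * n * (a + b).choose n := by
    exact_mod_cast Nat.add_mul_sum_range_mul_choose_mul_choose a b n
  simp only [hypergeomProb, mul_div_assoc', ← Finset.sum_div]
  rw [div_eq_div_iff hpos hab']
  push_cast at key
  linear_combination key

namespace Nat.Partition

variable {N : ℕ}

theorem prod_Icc_count_eq_prod_toFinset {M : Type*} [CommMonoid M] (lam : Nat.Partition N)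
    {f : ℕ → M} (hf : f 0 = 1) :
    ∏ i ∈ Icc 1 N, f (lam.parts.count i)
      = ∏ i ∈ lam.parts.toFinset, f (lam.parts.count i) := by
  refine (Finset.prod_subset (fun i hi => ?_) fun i _ hi => ?_).symm
  · rw [Multiset.mem_toFinset] at hi
    exact Finset.mem_Icc.mpr ⟨lam.parts_pos hi, le_of_mem_parts hi⟩
  · rw [Multiset.count_eq_zero.mpr (by simpa using hi), hf]

theorem parts_eq_replicate_of_parts_le_two {lam : Nat.Partition N}
    (h : ∀ i ∈ lam.parts, i ≤ 2) :
    lam.parts = Multiset.replicate (lam.parts.count 2) 2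
      + Multiset.replicate (lam.parts.count 1) 1 := by
  ext i
  rw [Multiset.count_add, Multiset.count_replicate, Multiset.count_replicate]
  by_cases hi : i ∈ lam.parts
  · obtain rfl | rfl : i = 2 ∨ i = 1 := by have := h i hi; have := lam.parts_pos hi; omega
    all_goals simp
  · have := Multiset.count_eq_zero.mpr hi
    split_ifs <;> simp_all

theorem two_mul_count_two_add_count_one {lam : Nat.Partition N}
    (h : ∀ i ∈ lam.parts, i ≤ 2) :
    2 * lam.parts.count 2 + lam.parts.count 1 = N := by
  have hsum := lam.parts_sum
  rw [parts_eq_replicate_of_parts_le_two h] at hsum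
  simpa [mul_comm] using hsum

theorem card_parts_of_parts_le_two {lam : Nat.Partition N}
    (h : ∀ i ∈ lam.parts, i ≤ 2) :
    Multiset.card lam.parts = lam.parts.count 2 + lam.parts.count 1 := by
  conv_lhs => rw [parts_eq_replicate_of_parts_le_two h]
  simp

theorem prod_Icc_count_of_parts_le_two {M : Type*} [CommMonoid M] {lam : Nat.Partition N}
    (h : ∀ i ∈ lam.parts, i ≤ 2) {f : ℕ → M} (hf : f 0 = 1) :
    ∏ i ∈ Icc 1 N, f (lam.parts.count i) = f (lam.parts.count 1) * f (lam.parts.count 2) := by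
  rw [prod_Icc_count_eq_prod_toFinset lam hf,
    ← Finset.prod_pair (f := fun i => f (lam.parts.count i)) (by norm_num : (1 : ℕ) ≠ 2)]
  refine Finset.prod_subset (fun i hi => ?_) fun i _ hi => ?_
  · rw [Multiset.mem_toFinset] at hi
    have := h i hi; have := lam.parts_pos hi
    simp only [Finset.mem_insert, Finset.mem_singleton]
    omega
  · rw [Multiset.count_eq_zero.mpr (by simpa using hi), hf]

def onesTwos (N m : ℕ) (hm : 2 * m ≤ N) : Nat.Partition N where
  parts := Multiset.replicate m 2 + Multiset.replicate (N - 2 * m) 1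
  parts_pos hi := by
    rcases Multiset.mem_add.mp hi with hi | hi <;> simp [Multiset.eq_of_mem_replicate hi]
  parts_sum := by simp [mul_comm]; omega

theorem sum_filter_parts_le_two {M : Type*} [AddCommMonoid M] (f : ℕ → M) :
    ∑ lam ∈ univ.filter (fun lam : Nat.Partition N => ∀ i ∈ lam.parts, i ≤ 2),
      f (lam.parts.count 2) = ∑ m ∈ range (N / 2 + 1), f m := by
  refine Finset.sum_bij' (fun lam _ => lam.parts.count 2)
    (fun m hm => onesTwos N m (by rw [Finset.mem_range] at hm; omega)) ?_ ?_ ?_ ?_ ?_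
  · intro lam hlam
    have := two_mul_count_two_add_count_one (Finset.mem_filter.mp hlam).2
    rw [Finset.mem_range]
    omega
  · intro m hm
    simp only [Finset.mem_filter, Finset.mem_univ, true_and, onesTwos, Multiset.mem_add]
    rintro i (hi | hi) <;> simp [Multiset.eq_of_mem_replicate hi]
  · intro lam hlam
    have h := (Finset.mem_filter.mp hlam).2
    have := two_mul_count_two_add_count_one h
    ext1
    change _ + _ = _
    conv_rhs => rw [parts_eq_replicate_of_parts_le_two h]
    rw [show N - 2 * lam.parts.count 2 = lam.parts.count 1 by omega]
  · intro m _
    simp [onesTwos, Multiset.count_replicate]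
  · exact fun _ _ => rfl

end Nat.Partition

theorem haldaneProb_semionic (q P K N : ℕ) (lam : Nat.Partition N) :
    haldaneProb q (q + 1) P K N lam
      = if ∀ i ∈ lam.parts, i ≤ 2 then hypergeomProb P K N (lam.parts.count 2) else 0 := by
  simp only [haldaneProb, haldaneWeight, multiFactor, hypergeomProb, Nat.add_sub_cancel_left,
    one_mul, Nat.reduceAdd]
  split_ifs with h
  · have hN := lam.two_mul_count_two_add_count_one h
    rw [lam.card_parts_of_parts_le_two h,
      lam.prod_Icc_count_of_parts_le_two h (f := fun k => (k.factorial : ℚ)) (by simp)]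
    set k₁ := lam.parts.count 1
    set k₂ := lam.parts.count 2
    have hchoose : ((k₂ + k₁).choose k₂ : ℚ) ≠ 0 := by
      exact_mod_cast (Nat.choose_pos (Nat.le_add_right _ _)).ne'
    rw [Nat.add_sub_cancel, show N - k₂ = k₂ + k₁ by omega, ← Nat.choose_symm_add,
      mul_comm (k₁.factorial : ℚ), ← Nat.cast_add_choose, add_comm P]
    simp only [Finset.prod_range_succ, Finset.prod_range_zero, Nat.choose_zero_right,
      Nat.choose_self, Nat.cast_one, one_pow, mul_one, div_mul_cancel₀ _ hchoose]
  · simp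

theorem sum_mul_haldaneProb_semionic {q P K N : ℕ} (f : ℕ → ℚ) (hP : P ≤ N / 2) :
    ∑ lam : Nat.Partition N, f (lam.parts.count 2) * haldaneProb q (q + 1) P K N lam
      = ∑ m ∈ range (N + 1), f m * hypergeomProb P K N m := by
  simp only [haldaneProb_semionic, mul_ite, mul_zero]
  rw [← Finset.sum_filter,
    Nat.Partition.sum_filter_parts_le_two (fun m => f m * hypergeomProb P K N m)]
  refine Finset.sum_subset (Finset.range_subset_range.mpr (by omega)) fun m _ hm => ?_
  rw [Finset.mem_range, not_lt] at hm
  simp [hypergeomProb, Nat.choose_eq_zero_of_lt (show P < m by omega)]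

theorem count_one_mul_haldaneProb_semionic (q P K N : ℕ) (lam : Nat.Partition N) :
    (lam.parts.count 1 : ℚ) * haldaneProb q (q + 1) P K N lam
      = (N - 2 * lam.parts.count 2) * haldaneProb q (q + 1) P K N lam := by
  rw [haldaneProb_semionic]
  split_ifs with h
  · have hN : (N : ℚ) = 2 * lam.parts.count 2 + lam.parts.count 1 := by
      exact_mod_cast (lam.two_mul_count_two_add_count_one h).symm
    rw [hN]
    ring
  · simp

/-- **semionic family `r = q + 1`.** Let `q ≥ 1`, `r = q + 1`, `P ≥ 0`,
`N = rP + 1`, and `K ≥ qP + 1`. Under the Haldane probability measure, the mean number of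
doubly occupied states is `⟨k₂⟩ = N·P/(K+P)` and the mean number of singly occupied states
is `⟨k₁⟩ = N·(K−P)/(K+P)`. -/
theorem stmt16 (q r P K N : ℕ) (hq : 1 ≤ q) (hr : r = q + 1) (hN : N = r * P + 1)
    (hK : q * P + 1 ≤ K) :
    (∑ lam : Nat.Partition N, (lam.parts.count 2 : ℚ) * haldaneProb q r P K N lam =
        (N : ℚ) * (P : ℚ) / ((K : ℚ) + (P : ℚ))) ∧
      (∑ lam : Nat.Partition N, (lam.parts.count 1 : ℚ) * haldaneProb q r P K N lam =
        (N : ℚ) * ((K : ℚ) - (P : ℚ)) / ((K : ℚ) + (P : ℚ))) := by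
  subst hr
  have hN' : N = q * P + P + 1 := by rw [hN]; ring
  have hqP : P ≤ q * P := Nat.le_mul_of_pos_left P hq
  have hP : P ≤ N / 2 := by omega
  have hNK : N ≤ P + K := by omega
  have hKP : (K : ℚ) + P ≠ 0 := by norm_cast; omega
  have hmean := sum_mul_hypergeomProb hNK
  rw [add_comm (P : ℚ)] at hmean
  constructor
  · rw [sum_mul_haldaneProb_semionic Nat.cast hP, hmean]
  · simp only [count_one_mul_haldaneProb_semionic]
    rw [sum_mul_haldaneProb_semionic (fun m : ℕ => (N : ℚ) - 2 * m) hP]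
    simp only [sub_mul, Finset.sum_sub_distrib, mul_assoc, ← Finset.mul_sum, hmean,
      sum_hypergeomProb hNK]
    field_simp
    ring
end
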